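/- arXiv:2401.14103 — 2 statements merged into one kernel-verified Lean document; each statement's English description precedes it below -/
import Mathlib

section
/- Let f, f₀ : ℤ^d → ℂ be finitely supported with supp f ⊂ D ∩ ℤ^d, supp f₀ ⊂ D₀ ∩ ℤ^d for bounded convex sets D, D₀ ⊂ ℝ^d with dist(D, D₀) > 0, and suppose f₀ ≢ 0. Then the data |𝓕(f+f₀)(p)|² and |𝓕f(p)|² for all p ∈ T^d, together with knowledge of f₀, uniquely determine f. In other words, if f₁, f₂ both satisfy the support condition and |𝓕(f₁+f₀)| = |𝓕(f₂+f₀)| and |𝓕f₁| = |𝓕f₂| on T^d, then f₁ = f₂. -/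
open MeasureTheory Complex

/-- Dot product `k · x` between `k ∈ ℝ^d` and a lattice point `x ∈ ℤ^d`. -/
def dotIR {d : ℕ} (k : Fin d → ℝ) (x : Fin d → ℤ) : ℝ := ∑ i, k i * (x i : ℝ)

/-- Discrete Fourier transform `𝓕u(k) = (2π)^{-d/2} ∑_{x ∈ ℤ^d} u(x) e^{-ik·x}`. -/
noncomputable def dft {d : ℕ} (u : (Fin d → ℤ) → ℂ) (k : Fin d → ℝ) : ℂ :=
  ((2 * Real.pi) ^ (-(d : ℝ) / 2) : ℝ) *
    ∑' x : Fin d → ℤ, u x * Complex.exp (-Complex.I * (dotIR k x : ℝ))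

/-- Inverse discrete Fourier transform
`𝓕⁻¹w(x) = (2π)^{-d/2} ∫_{T^d} w(k) e^{ik·x} dk`, with `T^d` realized as `[-π,π]^d`. -/
noncomputable def invDft {d : ℕ} (w : (Fin d → ℝ) → ℂ) (x : Fin d → ℤ) : ℂ :=
  ((2 * Real.pi) ^ (-(d : ℝ) / 2) : ℝ) *
    ∫ k in Set.univ.pi (fun _ : Fin d => Set.Icc (-Real.pi) Real.pi),
      w k * Complex.exp (Complex.I * (dotIR k x : ℝ))


/-- The natural embedding of `ℤ^d` into Euclidean space `ℝ^d`. -/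
def toE {d : ℕ} (x : Fin d → ℤ) : EuclideanSpace ℝ (Fin d) := WithLp.toLp 2 (fun i => (x i : ℝ))

/-!
Put `g = f₁ - f₂` and regard `g` and `f₀` as elements of the group algebra `ℂ[ℤ^d]`, on which
`𝓕` is, up to a constant, evaluation at the characters `x ↦ e^{-ik·x}`. Polarizing the two
modulus identities gives `Re (𝓕g · conj 𝓕f₀) = 0`, which by linear independence of characters
says `A + conjneg A = 0` for the cross-correlation `A = g * conjneg f₀`. If both `A z` and
`A (-z)` were nonzero we would have `z = x - y = -(x' - y')` with `x, x' ∈ D`, `y, y' ∈ D₀`,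
so `(x + x') / 2 = (y + y') / 2 ∈ D ∩ D₀`. Hence `A = 0`, and since `ℂ[ℤ^d]` has no zero
divisors, `g = 0`.
-/

open Function AddMonoidAlgebra
open scoped ComplexConjugate InnerProductSpace

lemma real_inner_sub_left_eq_zero_of_norm_add_eq {F : Type*} [NormedAddCommGroup F]
    [InnerProductSpace ℝ F] {a b c : F} (h₁ : ‖a + c‖ = ‖b + c‖) (h₂ : ‖a‖ = ‖b‖) :
    ⟪a - b, c⟫_ℝ = 0 := by
  have ha := norm_add_sq_real a c
  have hb := norm_add_sq_real b c
  rw [h₁, h₂] at ha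
  rw [inner_sub_left]
  linarith

lemma add_ne_add_of_convex_of_disjoint {E : Type*} [AddCommGroup E] [Module ℝ E]
    {D D₀ : Set E} (hD : Convex ℝ D) (hD₀ : Convex ℝ D₀) (hdisj : Disjoint D D₀)
    {x x' y y' : E} (hx : x ∈ D) (hx' : x' ∈ D) (hy : y ∈ D₀) (hy' : y' ∈ D₀) :
    x + x' ≠ y + y' := by
  intro h
  have hmid : (1 / 2 : ℝ) • (x + x') ∈ D := by
    simpa [smul_add] using hD hx hx' (by norm_num) (by norm_num) (by norm_num)
  have hmid₀ : (1 / 2 : ℝ) • (y + y') ∈ D₀ := by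
    simpa [smul_add] using hD₀ hy hy' (by norm_num) (by norm_num) (by norm_num)
  exact Set.disjoint_left.mp hdisj hmid (h ▸ hmid₀)

namespace AddMonoidAlgebra

variable {R G : Type*} [CommSemiring R] [StarRing R] [AddGroup G]

noncomputable def conjneg (p : R[G]) : R[G] :=
  ofCoeff ((p.coeff.mapRange (starRingEnd R) (map_zero _)).equivMapDomain (Equiv.neg G))

@[simp] lemma coe_coeff_conjneg (p : R[G]) : ⇑(conjneg p).coeff = _root_.conjneg ⇑p.coeff := by
  ext x
  simp [conjneg]

lemma conjneg_eq_zero {p : R[G]} : conjneg p = 0 ↔ p = 0 := by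
  rw [← coeff_eq_zero, ← coeff_eq_zero, ← Finsupp.coe_eq_zero, ← Finsupp.coe_eq_zero,
    coe_coeff_conjneg, _root_.conjneg_eq_zero]

lemma eq_zero_of_add_conjneg_eq_zero {A : R[G]} (h : A + conjneg A = 0)
    (hA : ∀ z, A.coeff z ≠ 0 → A.coeff (-z) = 0) : A = 0 := by
  ext z
  have hz : A.coeff z + conj (A.coeff (-z)) = 0 := by
    simpa using congrArg (fun B : R[G] => B.coeff z) h
  by_contra hne
  simp [hA z hne] at hz
  exact hne hz

lemma exists_sub_eq_of_coeff_mul_conjneg_ne_zero {p q : R[G]} {z : G}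
    (hz : (p * conjneg q).coeff z ≠ 0) :
    ∃ x y, p.coeff x ≠ 0 ∧ q.coeff y ≠ 0 ∧ x - y = z := by
  classical
  obtain ⟨x, hx, y, hy, rfl⟩ := Finset.mem_add.mp
    (support_coeff_mul_subset p (conjneg q) (Finsupp.mem_support_iff.mpr hz))
  refine ⟨x, -y, Finsupp.mem_support_iff.mp hx, ?_, sub_neg_eq_add x y⟩
  simpa [starRingEnd_apply] using Finsupp.mem_support_iff.mp hy

end AddMonoidAlgebra

section Fourier

variable {d : ℕ}

lemma dotIR_add_left (k k' : Fin d → ℝ) (x : Fin d → ℤ) :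
    dotIR (k + k') x = dotIR k x + dotIR k' x := by
  simp [dotIR, add_mul, Finset.sum_add_distrib]

lemma dotIR_add_right (k : Fin d → ℝ) (x y : Fin d → ℤ) :
    dotIR k (x + y) = dotIR k x + dotIR k y := by
  simp [dotIR, mul_add, Finset.sum_add_distrib]

lemma dotIR_neg_right (k : Fin d → ℝ) (x : Fin d → ℤ) : dotIR k (-x) = -dotIR k x := by
  simp [dotIR]

lemma dotIR_single_left (i : Fin d) (t : ℝ) (x : Fin d → ℤ) :
    dotIR (Pi.single i t) x = t * x i := by
  simp [dotIR, Pi.single_apply]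

noncomputable def fourierChar (k : Fin d → ℝ) (x : Fin d → ℤ) : ℂ := exp (-I * dotIR k x)

lemma fourierChar_add_left (k k' : Fin d → ℝ) (x : Fin d → ℤ) :
    fourierChar (k + k') x = fourierChar k x * fourierChar k' x := by
  simp [fourierChar, dotIR_add_left, ← Complex.exp_add, mul_add]

lemma fourierChar_add_right (k : Fin d → ℝ) (x y : Fin d → ℤ) :
    fourierChar k (x + y) = fourierChar k x * fourierChar k y := by
  simp [fourierChar, dotIR_add_right, ← Complex.exp_add, mul_add]

lemma conj_fourierChar (k : Fin d → ℝ) (x : Fin d → ℤ) :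
    conj (fourierChar k x) = fourierChar k (-x) := by
  simp [fourierChar, dotIR_neg_right, ← Complex.exp_conj]

lemma fourierChar_injective : Injective (fun x k => fourierChar (d := d) k x) := by
  intro x y hxy
  by_contra hne
  obtain ⟨i, hi⟩ := Function.ne_iff.mp hne
  have hn : ((x i - y i : ℤ) : ℝ) ≠ 0 := by exact_mod_cast sub_ne_zero.mpr hi
  -- at this frequency the character of `x - y` takes the value `e^{-iπ} = -1`
  set k : Fin d → ℝ := Pi.single i (Real.pi / (x i - y i : ℤ))
  have h : fourierChar k (x - y) * fourierChar k y = fourierChar k y := by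
    rw [← fourierChar_add_right, sub_add_cancel]
    exact congrFun hxy k
  rw [mul_eq_right₀ (show fourierChar k y ≠ 0 from Complex.exp_ne_zero _)] at h
  have hpi : -I * (dotIR k (x - y) : ℂ) = -(Real.pi * I) := by
    rw [dotIR_single_left, Pi.sub_apply, div_mul_cancel₀ _ hn]
    ring
  rw [fourierChar, hpi, Complex.exp_neg, Complex.exp_pi_mul_I] at h
  norm_num at h

noncomputable def fourierEval (k : Fin d → ℝ) : ℂ[Fin d → ℤ] →ₐ[ℂ] ℂ :=
  lift ℂ ℂ (Fin d → ℤ)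
    { toFun x := fourierChar k x.toAdd
      map_one' := by simp [fourierChar, dotIR]
      map_mul' x y := fourierChar_add_right k x.toAdd y.toAdd }

lemma fourierEval_apply (k : Fin d → ℝ) (p : ℂ[Fin d → ℤ]) :
    fourierEval k p = p.coeff.sum fun x c => c * fourierChar k x := by
  simp [fourierEval, AddMonoidAlgebra.lift_apply]

lemma conj_fourierEval (k : Fin d → ℝ) (p : ℂ[Fin d → ℤ]) :
    conj (fourierEval k p) = fourierEval k (conjneg p) := by
  rw [fourierEval_apply, fourierEval_apply, map_finsuppSum]
  simp [AddMonoidAlgebra.conjneg, Finsupp.sum_equivMapDomain, Finsupp.sum_mapRange_index,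
    conj_fourierChar]

lemma eq_zero_of_forall_fourierEval_eq_zero {p : ℂ[Fin d → ℤ]} (h : ∀ k, fourierEval k p = 0) :
    p = 0 := by
  let χ : (Fin d → ℤ) → Multiplicative (Fin d → ℝ) →* ℂ := fun x =>
    { toFun k := fourierChar k.toAdd x
      map_one' := by simp [fourierChar, dotIR]
      map_mul' k k' := fourierChar_add_left k.toAdd k'.toAdd x }
  have hχ : LinearIndependent ℂ fun x => ⇑(χ x) :=
    (linearIndependent_monoidHom _ ℂ).comp χ fun x y hxy => fourierChar_injective (by
      funext k; exact DFunLike.congr_fun hxy (Multiplicative.ofAdd k))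
  rw [← coeff_eq_zero]
  refine linearIndependent_iff.mp hχ _ (funext fun k => ?_)
  simpa [Finsupp.linearCombination_apply, Finsupp.sum, fourierEval_apply, χ, mul_comm]
    using h k.toAdd

lemma dft_coeff (p : ℂ[Fin d → ℤ]) (k : Fin d → ℝ) :
    dft ⇑p.coeff k = ((2 * Real.pi) ^ (-(d : ℝ) / 2) : ℝ) * fourierEval k p := by
  rw [dft, fourierEval_apply, Finsupp.sum, tsum_eq_sum (s := p.coeff.support)]
  · rfl
  · intro x hx
    simp [Finsupp.notMem_support_iff.mp hx]

end Fourier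

lemma toE_add {d : ℕ} (x y : Fin d → ℤ) : toE (x + y) = toE x + toE y := by
  ext i
  simp [toE]

lemma coeff_mul_conjneg_neg_eq_zero {R : Type*} [CommSemiring R] [StarRing R] {d : ℕ}
    {D D₀ : Set (EuclideanSpace ℝ (Fin d))} (hD : Convex ℝ D) (hD₀ : Convex ℝ D₀)
    (hdisj : Disjoint D D₀) {p q : R[Fin d → ℤ]} (hp : ∀ x, p.coeff x ≠ 0 → toE x ∈ D)
    (hq : ∀ y, q.coeff y ≠ 0 → toE y ∈ D₀) {z : Fin d → ℤ}
    (hz : (p * conjneg q).coeff z ≠ 0) : (p * conjneg q).coeff (-z) = 0 := by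
  by_contra hz'
  obtain ⟨x, y, hx, hy, rfl⟩ := exists_sub_eq_of_coeff_mul_conjneg_ne_zero hz
  obtain ⟨x', y', hx', hy', h⟩ := exists_sub_eq_of_coeff_mul_conjneg_ne_zero hz'
  refine add_ne_add_of_convex_of_disjoint hD hD₀ hdisj (hp x hx) (hp x' hx') (hq y hy)
    (hq y' hy') ?_
  rw [← toE_add, ← toE_add]
  congr 1
  linear_combination h

lemma norm_fourierEval_eq_of_norm_dft_eq {d : ℕ} {p q : ℂ[Fin d → ℤ]} {k : Fin d → ℝ}
    (h : ‖dft ⇑p.coeff k‖ = ‖dft ⇑q.coeff k‖) : ‖fourierEval k p‖ = ‖fourierEval k q‖ := by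
  rw [dft_coeff, dft_coeff, norm_mul, norm_mul] at h
  exact mul_left_cancel₀ (by simp; positivity) h

theorem phaseless_uniqueness_general {d : ℕ} (D D₀ : Set (EuclideanSpace ℝ (Fin d)))
    (hDc : Convex ℝ D) (hD₀c : Convex ℝ D₀)
    (f₀ : (Fin d → ℤ) → ℂ) (hf₀s : (Function.support f₀).Finite)
    (hf₀D : ∀ x, f₀ x ≠ 0 → toE x ∈ D₀) (hf₀ne : f₀ ≠ 0)
    (hsep : ∃ δ : ℝ, 0 < δ ∧ ∀ a ∈ D, ∀ b ∈ D₀, δ ≤ dist a b)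
    (f₁ f₂ : (Fin d → ℤ) → ℂ)
    (hf₁s : (Function.support f₁).Finite) (hf₂s : (Function.support f₂).Finite)
    (hf₁D : ∀ x, f₁ x ≠ 0 → toE x ∈ D) (hf₂D : ∀ x, f₂ x ≠ 0 → toE x ∈ D)
    (h1 : ∀ p : Fin d → ℝ, ‖dft (f₁ + f₀) p‖ = ‖dft (f₂ + f₀) p‖)
    (h2 : ∀ p : Fin d → ℝ, ‖dft f₁ p‖ = ‖dft f₂ p‖) :
    f₁ = f₂ := by
  have hdisj : Disjoint D D₀ := by
    obtain ⟨δ, hδ, hsep⟩ := hsep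
    exact Set.disjoint_left.mpr fun a ha ha₀ =>
      (hδ.trans_le (hsep a ha a ha₀)).ne' (dist_self a)
  obtain ⟨p₁, rfl⟩ : ∃ p : ℂ[Fin d → ℤ], ⇑p.coeff = f₁ := ⟨ofCoeff (.ofSupportFinite f₁ hf₁s), rfl⟩
  obtain ⟨p₂, rfl⟩ : ∃ p : ℂ[Fin d → ℤ], ⇑p.coeff = f₂ := ⟨ofCoeff (.ofSupportFinite f₂ hf₂s), rfl⟩
  obtain ⟨q, rfl⟩ : ∃ q : ℂ[Fin d → ℤ], ⇑q.coeff = f₀ := ⟨ofCoeff (.ofSupportFinite f₀ hf₀s), rfl⟩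
  simp only [← Finsupp.coe_add, ← coeff_add] at h1
  have hsupp : ∀ x, (p₁ - p₂).coeff x ≠ 0 → toE x ∈ D := fun x hx => by
    by_cases h : p₁.coeff x = 0
    · exact hf₂D x (by simpa [h] using hx)
    · exact hf₁D x h
  set A := (p₁ - p₂) * conjneg q
  have hre : ∀ k, (fourierEval k A).re = 0 := fun k => by
    have hpq := norm_fourierEval_eq_of_norm_dft_eq (h1 k)
    rw [map_add, map_add] at hpq
    have h := real_inner_sub_left_eq_zero_of_norm_add_eq hpq
      (norm_fourierEval_eq_of_norm_dft_eq (h2 k))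
    rwa [real_inner_comm, Complex.inner, ← map_sub, conj_fourierEval, ← map_mul] at h
  have hA : A + conjneg A = 0 := eq_zero_of_forall_fourierEval_eq_zero fun k => by
    rw [map_add, ← conj_fourierEval, Complex.add_conj, hre k]
    simp
  have hA0 : A = 0 := eq_zero_of_add_conjneg_eq_zero hA fun z hz =>
    coeff_mul_conjneg_neg_eq_zero hDc hD₀c hdisj hsupp hf₀D hz
  have hq : conjneg q ≠ 0 := conjneg_eq_zero.not.mpr (by rintro rfl; exact hf₀ne rfl)
  rw [← sub_eq_zero.mp ((mul_eq_zero.mp hA0).resolve_right hq)]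

/-- Phaseless uniqueness with background source: if `supp f₁, supp f₂ ⊂ D ∩ ℤ^d`,
`supp f₀ ⊂ D₀ ∩ ℤ^d`, `f₀ ≢ 0`, `D, D₀` convex bounded with `dist(D, D₀) > 0`, and
`|𝓕(f₁+f₀)| = |𝓕(f₂+f₀)|`, `|𝓕f₁| = |𝓕f₂|` on the torus, then `f₁ = f₂`. -/
theorem phaseless_uniqueness {d : ℕ} (D D₀ : Set (EuclideanSpace ℝ (Fin d)))
    (hDb : Bornology.IsBounded D) (hD₀b : Bornology.IsBounded D₀)
    (hDc : Convex ℝ D) (hD₀c : Convex ℝ D₀)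
    (f₀ : (Fin d → ℤ) → ℂ) (hf₀s : (Function.support f₀).Finite)
    (hf₀D : ∀ x, f₀ x ≠ 0 → toE x ∈ D₀) (hf₀ne : f₀ ≠ 0)
    (hsep : ∃ δ : ℝ, 0 < δ ∧ ∀ a ∈ D, ∀ b ∈ D₀, δ ≤ dist a b)
    (f₁ f₂ : (Fin d → ℤ) → ℂ)
    (hf₁s : (Function.support f₁).Finite) (hf₂s : (Function.support f₂).Finite)
    (hf₁D : ∀ x, f₁ x ≠ 0 → toE x ∈ D) (hf₂D : ∀ x, f₂ x ≠ 0 → toE x ∈ D)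
    (h1 : ∀ p : Fin d → ℝ, ‖dft (f₁ + f₀) p‖ = ‖dft (f₂ + f₀) p‖)
    (h2 : ∀ p : Fin d → ℝ, ‖dft f₁ p‖ = ‖dft f₂ p‖) :
    f₁ = f₂ :=
  phaseless_uniqueness_general D D₀ hDc hD₀c f₀ hf₀s hf₀D hf₀ne hsep f₁ f₂ hf₁s hf₂s hf₁D hf₂D h1 h2
end

section
/- Let u : ℤ^d → ℂ be finitely supported, λ ∈ ℝ, k₁,…,k_J ∈ ℝ^d, and v := (∏_{j=1}^J (L_{k_j} − λ)) u, where L_k u(x) = e^{−ik·x}Δ(e^{ik·x}u(x)). Then v is finitely supported and its Fourier transform satisfies 𝓕v(p) = 𝓕u(p)·∏_{j=1}^J (φ(p + k_j) − λ); in particular, if each k_j lies on Γ(λ) = {k : φ(k) = λ}, then 𝓕v vanishes at p = κ − k_j for every κ ∈ Γ(λ) and every j. -/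
open MeasureTheory Complex

/-- The symbol `φ(k) = 2 ∑_{i=1}^d cos k_i` of the discrete Laplacian. -/
noncomputable def phiSym {d : ℕ} (k : Fin d → ℝ) : ℝ := 2 * ∑ i, Real.cos (k i)

/-- Discrete Laplacian `Δψ(x) = ∑_{|x'−x|=1} ψ(x')` on `ℤ^d`. -/
noncomputable def discLap {d : ℕ} (u : (Fin d → ℤ) → ℂ) (x : Fin d → ℤ) : ℂ :=
  ∑ i : Fin d, (u (x + Pi.single i 1) + u (x - Pi.single i 1))

/-- Modulated Laplacian `L_k u(x) = e^{−ik·x} Δ(e^{ik·x} u(x))`. -/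
noncomputable def modLap {d : ℕ} (k : Fin d → ℝ) (u : (Fin d → ℤ) → ℂ)
    (x : Fin d → ℤ) : ℂ :=
  Complex.exp (-Complex.I * (dotIR k x : ℝ)) *
    discLap (fun y => Complex.exp (Complex.I * (dotIR k y : ℝ)) * u y) x

/-- `v := (∏_{j=1}^J (L_{k_j} − λ)) u` over a list `ks = [k₁,…,k_J]`. -/
noncomputable def modPoly {d : ℕ} (lam : ℝ) (ks : List (Fin d → ℝ))
    (u : (Fin d → ℤ) → ℂ) : (Fin d → ℤ) → ℂ :=
  ks.foldr (fun k g => fun x => modLap k g x - (lam : ℂ) * g x) u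

namespace ModPolyAux

variable {d : ℕ}

lemma dotIR_add (k : Fin d → ℝ) (x y : Fin d → ℤ) :
    dotIR k (x + y) = dotIR k x + dotIR k y := by
  simp [dotIR, mul_add, Finset.sum_add_distrib]

lemma dotIR_sub (k : Fin d → ℝ) (x y : Fin d → ℤ) :
    dotIR k (x - y) = dotIR k x - dotIR k y := by
  simp [dotIR, mul_sub, Finset.sum_sub_distrib]

lemma dotIR_single (k : Fin d → ℝ) (i : Fin d) :
    dotIR k (Pi.single i 1) = k i := by
  simp only [dotIR]
  rw [Finset.sum_eq_single i]
  · simp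
  · intro j _ hj; simp [Pi.single_apply, hj]
  · simp

lemma summable_of_support_finite {f : (Fin d → ℤ) → ℂ}
    (hf : (Function.support f).Finite) : Summable f := by
  apply summable_of_ne_finset_zero (s := hf.toFinset)
  intro b hb
  by_contra h
  exact hb (hf.mem_toFinset.mpr h)

lemma support_modLap_subset (k : Fin d → ℝ) (u : (Fin d → ℤ) → ℂ) :
    Function.support (modLap k u) ⊆
      ⋃ i : Fin d, ((· - Pi.single i 1) '' Function.support u ∪
        (· + Pi.single i 1) '' Function.support u) := by
  intro x hx
  have hd : discLap (fun y => Complex.exp (Complex.I * (dotIR k y : ℝ)) * u y) x ≠ 0 := by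
    intro h
    apply hx
    simp [modLap, h]
  obtain ⟨i, _, hi⟩ := Finset.exists_ne_zero_of_sum_ne_zero hd
  have : u (x + Pi.single i 1) ≠ 0 ∨ u (x - Pi.single i 1) ≠ 0 := by
    by_contra h
    push_neg at h
    simp [h.1, h.2] at hi
  refine Set.mem_iUnion.mpr ⟨i, ?_⟩
  rcases this with h | h
  · exact Or.inl ⟨x + Pi.single i 1, h, by simp⟩
  · exact Or.inr ⟨x - Pi.single i 1, h, by simp⟩

lemma support_step_finite (k : Fin d → ℝ) (lam : ℝ) {u : (Fin d → ℤ) → ℂ}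
    (hu : (Function.support u).Finite) :
    (Function.support (fun x => modLap k u x - (lam : ℂ) * u x)).Finite := by
  apply Set.Finite.subset (s := Function.support (modLap k u) ∪ Function.support u)
  · exact Set.Finite.union
      (Set.Finite.subset
        (Set.finite_iUnion (fun i => (hu.image _).union (hu.image _)))
        (support_modLap_subset k u)) hu
  · intro x hx
    by_contra h
    simp only [Set.mem_union, Function.mem_support, not_or, not_not] at h
    apply hx
    simp [h.1, h.2]

lemma support_modLap_finite (k : Fin d → ℝ) {u : (Fin d → ℤ) → ℂ}
    (hu : (Function.support u).Finite) :
    (Function.support (modLap k u)).Finite :=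
  Set.Finite.subset
    (Set.finite_iUnion (fun i => (hu.image _).union (hu.image _)))
    (support_modLap_subset k u)

lemma two_cos' (θ : ℂ) :
    Complex.exp (Complex.I * θ) + Complex.exp (-(Complex.I * θ)) = 2 * Complex.cos θ := by
  rw [Complex.cos, mul_comm Complex.I θ, show -(θ * Complex.I) = -θ * Complex.I by ring]
  ring

lemma tsum_modLap (k p : Fin d → ℝ) {u : (Fin d → ℤ) → ℂ}
    (hu : (Function.support u).Finite) :
    (∑' x : Fin d → ℤ, modLap k u x * Complex.exp (-Complex.I * (dotIR p x : ℝ)))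
      = ((phiSym (p + k) : ℝ) : ℂ) *
        ∑' x : Fin d → ℤ, u x * Complex.exp (-Complex.I * (dotIR p x : ℝ)) := by
  set c : (Fin d → ℤ) → ℂ := fun x => Complex.exp (-Complex.I * (dotIR p x : ℝ)) with hc
  -- pointwise expansion
  set F : Fin d → (Fin d → ℤ) → ℂ := fun i x =>
    Complex.exp (Complex.I * (k i : ℝ)) * u (x + Pi.single i 1) * c x +
      Complex.exp (-(Complex.I * (k i : ℝ))) * u (x - Pi.single i 1) * c x with hF
  have hpoint : ∀ x, modLap k u x * c x = ∑ i : Fin d, F i x := by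
    intro x
    simp only [modLap, discLap, Finset.mul_sum, Finset.sum_mul, hF]
    refine Finset.sum_congr rfl fun i _ => ?_
    have e1 : Complex.exp (-Complex.I * (dotIR k x : ℝ)) *
        Complex.exp (Complex.I * ((dotIR k (x + Pi.single i 1) : ℝ))) =
        Complex.exp (Complex.I * (k i : ℝ)) := by
      rw [← Complex.exp_add]
      congr 1
      rw [dotIR_add, dotIR_single]
      push_cast
      ring
    have e2 : Complex.exp (-Complex.I * (dotIR k x : ℝ)) *
        Complex.exp (Complex.I * ((dotIR k (x - Pi.single i 1) : ℝ))) =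
        Complex.exp (-(Complex.I * (k i : ℝ))) := by
      rw [← Complex.exp_add]
      congr 1
      rw [dotIR_sub, dotIR_single]
      push_cast
      ring
    calc Complex.exp (-Complex.I * (dotIR k x : ℝ)) *
          (Complex.exp (Complex.I * (dotIR k (x + Pi.single i 1) : ℝ)) * u (x + Pi.single i 1) +
            Complex.exp (Complex.I * (dotIR k (x - Pi.single i 1) : ℝ)) * u (x - Pi.single i 1)) * c x
        = (Complex.exp (-Complex.I * (dotIR k x : ℝ)) *
            Complex.exp (Complex.I * (dotIR k (x + Pi.single i 1) : ℝ))) * u (x + Pi.single i 1) * c x +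
          (Complex.exp (-Complex.I * (dotIR k x : ℝ)) *
            Complex.exp (Complex.I * (dotIR k (x - Pi.single i 1) : ℝ))) * u (x - Pi.single i 1) * c x := by
          ring
      _ = _ := by rw [e1, e2]
  have hsum1 : ∀ i : Fin d,
      Summable (fun x => Complex.exp (Complex.I * (k i : ℝ)) * u (x + Pi.single i 1) * c x) := by
    intro i
    apply summable_of_support_finite
    apply Set.Finite.subset (hu.image (· - Pi.single i 1))
    intro x hx
    have : u (x + Pi.single i 1) ≠ 0 := by
      intro h; apply hx; simp [h]
    exact ⟨x + Pi.single i 1, this, by simp⟩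
  have hsum2 : ∀ i : Fin d,
      Summable (fun x => Complex.exp (-(Complex.I * (k i : ℝ))) * u (x - Pi.single i 1) * c x) := by
    intro i
    apply summable_of_support_finite
    apply Set.Finite.subset (hu.image (· + Pi.single i 1))
    intro x hx
    have : u (x - Pi.single i 1) ≠ 0 := by
      intro h; apply hx; simp [h]
    exact ⟨x - Pi.single i 1, this, by simp⟩
  have step1 : (∑' x : Fin d → ℤ, modLap k u x * c x) = ∑ i : Fin d, ∑' x : Fin d → ℤ, F i x := by
    rw [tsum_congr hpoint]
    exact Summable.tsum_finsetSum (fun i _ => (hsum1 i).add (hsum2 i))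
  rw [step1]
  have key : ∀ i : Fin d, (∑' x : Fin d → ℤ, F i x) =
      (Complex.exp (Complex.I * ((k i : ℝ) + (p i : ℝ))) +
        Complex.exp (-(Complex.I * ((k i : ℝ) + (p i : ℝ))))) *
        ∑' x : Fin d → ℤ, u x * c x := by
    intro i
    have t1 : (∑' x : Fin d → ℤ, Complex.exp (Complex.I * (k i : ℝ)) * u (x + Pi.single i 1) * c x)
        = Complex.exp (Complex.I * ((k i : ℝ) + (p i : ℝ))) * ∑' x : Fin d → ℤ, u x * c x := by
      have := Equiv.tsum_eq (Equiv.addRight (Pi.single i 1 : Fin d → ℤ))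
        (fun y => Complex.exp (Complex.I * (k i : ℝ)) * u y *
          Complex.exp (-Complex.I * (dotIR p (y - Pi.single i 1) : ℝ)))
      simp only [Equiv.coe_addRight] at this
      rw [show (fun x => Complex.exp (Complex.I * (k i : ℝ)) * u (x + Pi.single i 1) * c x)
          = fun x => Complex.exp (Complex.I * (k i : ℝ)) * u (x + Pi.single i 1) *
            Complex.exp (-Complex.I * (dotIR p (x + Pi.single i 1 - Pi.single i 1) : ℝ)) from by
          funext x; simp [hc]]
      rw [this, ← tsum_mul_left]
      apply tsum_congr
      intro y
      rw [hc]
      simp only []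
      rw [dotIR_sub, dotIR_single]
      rw [show -Complex.I * ((dotIR p y - p i : ℝ) : ℂ)
            = Complex.I * ((p i : ℝ) : ℂ) + -Complex.I * ((dotIR p y : ℝ) : ℂ) by push_cast; ring,
          Complex.exp_add,
          show Complex.I * (((k i : ℝ) : ℂ) + ((p i : ℝ) : ℂ))
            = Complex.I * ((k i : ℝ) : ℂ) + Complex.I * ((p i : ℝ) : ℂ) by ring,
          Complex.exp_add]
      ring
    have t2 : (∑' x : Fin d → ℤ, Complex.exp (-(Complex.I * (k i : ℝ))) * u (x - Pi.single i 1) * c x)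
        = Complex.exp (-(Complex.I * ((k i : ℝ) + (p i : ℝ)))) * ∑' x : Fin d → ℤ, u x * c x := by
      have := Equiv.tsum_eq (Equiv.subRight (Pi.single i 1 : Fin d → ℤ))
        (fun y => Complex.exp (-(Complex.I * (k i : ℝ))) * u y *
          Complex.exp (-Complex.I * (dotIR p (y + Pi.single i 1) : ℝ)))
      simp only [Equiv.subRight_apply] at this
      rw [show (fun x => Complex.exp (-(Complex.I * (k i : ℝ))) * u (x - Pi.single i 1) * c x)
          = fun x => Complex.exp (-(Complex.I * (k i : ℝ))) * u (x - Pi.single i 1) *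
            Complex.exp (-Complex.I * (dotIR p (x - Pi.single i 1 + Pi.single i 1) : ℝ)) from by
          funext x; simp [hc]]
      rw [this, ← tsum_mul_left]
      apply tsum_congr
      intro y
      rw [hc]
      simp only []
      rw [dotIR_add, dotIR_single]
      rw [show -Complex.I * ((dotIR p y + p i : ℝ) : ℂ)
            = -Complex.I * ((p i : ℝ) : ℂ) + -Complex.I * ((dotIR p y : ℝ) : ℂ) by push_cast; ring,
          Complex.exp_add,
          show -(Complex.I * (((k i : ℝ) : ℂ) + ((p i : ℝ) : ℂ)))
            = -(Complex.I * ((k i : ℝ) : ℂ)) + -Complex.I * ((p i : ℝ) : ℂ) by ring,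
          Complex.exp_add]
      ring
    rw [hF]
    rw [Summable.tsum_add (hsum1 i) (hsum2 i), t1, t2, add_mul]
  rw [Finset.sum_congr rfl (fun i _ => key i), ← Finset.sum_mul]
  congr 1
  rw [show ((phiSym (p + k) : ℝ) : ℂ) = ∑ i : Fin d, 2 * Complex.cos ((k i : ℝ) + (p i : ℝ)) from ?_]
  · exact Finset.sum_congr rfl fun i _ => two_cos' _
  · simp only [phiSym, Pi.add_apply]
    push_cast [Complex.ofReal_cos]
    rw [Finset.mul_sum]
    refine Finset.sum_congr rfl fun i _ => ?_
    congr 2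
    ring

lemma dft_step (k p : Fin d → ℝ) (lam : ℝ) {u : (Fin d → ℤ) → ℂ}
    (hu : (Function.support u).Finite) :
    dft (fun x => modLap k u x - (lam : ℂ) * u x) p
      = (((phiSym (p + k) : ℝ) : ℂ) - (lam : ℂ)) * dft u p := by
  have hsu : Summable (fun x => u x * Complex.exp (-Complex.I * (dotIR p x : ℝ))) := by
    apply summable_of_support_finite
    apply Set.Finite.subset hu
    intro x hx
    intro h
    apply hx
    simp [h]
  have hsm : Summable (fun x => modLap k u x * Complex.exp (-Complex.I * (dotIR p x : ℝ))) := by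
    apply summable_of_support_finite
    apply Set.Finite.subset (support_modLap_finite k hu)
    intro x hx h
    apply hx
    simp [h]
  unfold dft
  have : (fun x => (modLap k u x - (lam : ℂ) * u x) * Complex.exp (-Complex.I * (dotIR p x : ℝ)))
      = fun x => modLap k u x * Complex.exp (-Complex.I * (dotIR p x : ℝ))
        - (lam : ℂ) * (u x * Complex.exp (-Complex.I * (dotIR p x : ℝ))) := by
    funext x; ring
  rw [this, Summable.tsum_sub hsm (hsu.mul_left _), tsum_mul_left, tsum_modLap k p hu]
  ring

end ModPolyAux

/-- `v = (∏_j (L_{k_j} − λ)) u` is finitely supported, its Fourier transform is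
`𝓕v(p) = 𝓕u(p) ∏_j (φ(p + k_j) − λ)`, and if each `k_j ∈ Γ(λ)` then `𝓕v` vanishes
at `p = κ − k_j` for every `κ ∈ Γ(λ)` and every `j`. -/
theorem modPoly_nonuniqueness {d : ℕ} (u : (Fin d → ℤ) → ℂ)
    (hu : (Function.support u).Finite) (lam : ℝ) (ks : List (Fin d → ℝ)) :
    (Function.support (modPoly lam ks u)).Finite ∧
      (∀ p : Fin d → ℝ,
        dft (modPoly lam ks u) p
          = dft u p * (ks.map (fun k => ((phiSym (p + k) : ℝ) : ℂ) - (lam : ℂ))).prod) ∧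
      ((∀ k ∈ ks, phiSym k = lam) →
        ∀ κ : Fin d → ℝ, phiSym κ = lam →
          ∀ k ∈ ks, dft (modPoly lam ks u) (κ - k) = 0) := by

  have main : ∀ ks : List (Fin d → ℝ),
      (Function.support (modPoly lam ks u)).Finite ∧
      ∀ p, dft (modPoly lam ks u) p
        = dft u p * (ks.map (fun k => ((phiSym (p + k) : ℝ) : ℂ) - (lam : ℂ))).prod := by
    intro ks
    induction ks with
    | nil => exact ⟨hu, fun p => by simp [modPoly]⟩
    | cons k ks ih =>
      have hcons : modPoly lam (k :: ks) u
          = fun x => modLap k (modPoly lam ks u) x - (lam : ℂ) * modPoly lam ks u x := rfl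
      refine ⟨?_, ?_⟩
      · rw [hcons]; exact ModPolyAux.support_step_finite k lam ih.1
      · intro p
        rw [hcons, ModPolyAux.dft_step k p lam ih.1, ih.2 p]
        simp only [List.map_cons, List.prod_cons]
        ring
  refine ⟨(main ks).1, (main ks).2, ?_⟩
  intro hks κ hκ k hk
  rw [(main ks).2 (κ - k)]
  have hz : (0 : ℂ) ∈ ks.map (fun k' => ((phiSym (κ - k + k') : ℝ) : ℂ) - (lam : ℂ)) := by
    refine List.mem_map.mpr ⟨k, hk, ?_⟩
    rw [show κ - k + k = κ from by ring, hκ, sub_self]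
  rw [List.prod_eq_zero hz, mul_zero]
end
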